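/- arXiv:math/0312009 — 2 statements merged into one kernel-verified Lean document; each statement's English description precedes it below -/
import Mathlib

section
/- Let u ∈ C²([d,1]) be positive and satisfy the ODE u'' + ((n-1)/r) u' = u^q on (d,1) with boundary conditions u(1)=0, u(d)=k, where n > 2, q > 1, 0 < d < 1, k > 0. Then u(x) ≤ k · (x^(2-n) - 1)/(d^(2-n) - 1) for all x ∈ [d,1]. -/
/-!
Subtract the harmonic comparison function `h`: `w = u - h` vanishes at both ends, and since
`r ^ (n - 1) * h'` is constant while `(r ^ (n - 1) * u')' = r ^ (n - 1) * u ^ q > 0`, the weighted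
derivative `r ^ (n - 1) * w'` is strictly increasing. Such a `w` obeys the maximum principle:
at an interior maximum `w' = 0`, so `w' > 0` to its right and `w` keeps growing up to the
right endpoint.
-/

open Set

theorem le_max_of_strictMonoOn_mul_deriv {w ρ : ℝ → ℝ} {a b : ℝ}
    (hw : ContinuousOn w (Icc a b)) (hρ : ∀ r ∈ Ioo a b, 0 < ρ r)
    (hmono : StrictMonoOn (fun r => ρ r * deriv w r) (Ioo a b)) :
    ∀ x ∈ Icc a b, w x ≤ max (w a) (w b) := by
  intro x hx
  by_contra! hlt
  obtain ⟨c, hc, hmax⟩ := isCompact_Icc.exists_isMaxOn ⟨x, hx⟩ hw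
  have hwc : max (w a) (w b) < w c := hlt.trans_le (hmax hx)
  have hc' : c ∈ Ioo a b :=
    ⟨hc.1.lt_of_ne (by rintro rfl; exact hwc.not_ge (le_max_left _ _)),
      hc.2.lt_of_ne (by rintro rfl; exact hwc.not_ge (le_max_right _ _))⟩
  have hcrit : deriv w c = 0 := (hmax.isLocalMax (Icc_mem_nhds hc'.1 hc'.2)).deriv_eq_zero
  have hinc : StrictMonoOn w (Icc c b) := by
    refine strictMonoOn_of_deriv_pos (convex_Icc c b) (hw.mono (Icc_subset_Icc_left hc.1)) ?_
    intro r hr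
    rw [interior_Icc] at hr
    have hr' : r ∈ Ioo a b := ⟨hc'.1.trans hr.1, hr.2⟩
    have hpos : 0 < ρ r * deriv w r := by simpa [hcrit] using hmono hc' hr' hr.1
    exact pos_of_mul_pos_right hpos (hρ r hr').le
  have := hinc (left_mem_Icc.2 hc'.2.le) (right_mem_Icc.2 hc'.2.le) hc'.2
  exact hwc.not_ge ((le_max_right _ _).trans' this.le)

theorem hasDerivAt_rpow_mul_deriv {u : ℝ → ℝ} {r : ℝ} (m : ℝ) (hr : 0 < r)
    (hu : DifferentiableAt ℝ (deriv u) r) :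
    HasDerivAt (fun s => s ^ m * deriv u s)
      (r ^ m * (deriv (deriv u) r + m / r * deriv u r)) r := by
  refine ((Real.hasDerivAt_rpow_const (p := m) (Or.inl hr.ne')).fun_mul
    hu.hasDerivAt).congr_deriv ?_
  rw [Real.rpow_sub hr, Real.rpow_one]
  field_simp
  ring

theorem strictMonoOn_rpow_mul_deriv {u : ℝ → ℝ} {a b : ℝ} (m : ℝ) (ha : 0 < a)
    (hu : ContDiffOn ℝ 2 u (Ioo a b))
    (hsub : ∀ r ∈ Ioo a b, 0 < deriv (deriv u) r + m / r * deriv u r) :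
    StrictMonoOn (fun r => r ^ m * deriv u r) (Ioo a b) := by
  have hu' : DifferentiableOn ℝ (deriv u) (Ioo a b) :=
    (hu.deriv_of_isOpen isOpen_Ioo (m := 1) (by norm_num)).differentiableOn one_ne_zero
  have hderiv (r) (hr : r ∈ Ioo a b) := hasDerivAt_rpow_mul_deriv m (ha.trans hr.1)
    (hu'.differentiableAt (isOpen_Ioo.mem_nhds hr))
  refine strictMonoOn_of_deriv_pos (convex_Ioo a b)
    (fun r hr => (hderiv r hr).continuousAt.continuousWithinAt) fun r hr => ?_
  rw [interior_Ioo] at hr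
  rw [(hderiv r hr).deriv]
  exact mul_pos (Real.rpow_pos_of_pos (ha.trans hr.1) m) (hsub r hr)

theorem rpow_mul_deriv_sub_rpow {u : ℝ → ℝ} {m p r : ℝ} (c β : ℝ) (hmp : m + p = 1)
    (hr : 0 < r) (hu : DifferentiableAt ℝ u r) :
    r ^ m * deriv (fun x => u x - c * (x ^ p - β)) r = r ^ m * deriv u r - c * p := by
  have hφ : HasDerivAt (fun x => c * (x ^ p - β)) (c * (p * r ^ (p - 1))) r :=
    ((Real.hasDerivAt_rpow_const (Or.inl hr.ne')).sub_const β).const_mul c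
  have hcancel : r ^ m * r ^ (p - 1) = 1 := by
    rw [← Real.rpow_add hr, show m + (p - 1) = 0 by linarith, Real.rpow_zero]
  rw [(hu.hasDerivAt.fun_sub hφ).deriv]
  linear_combination (-(c * p)) * hcancel

theorem stmt0_general (n : ℕ) (hn : 2 < n) (q d k : ℝ)
    (hd0 : 0 < d) (hd1 : d < 1)
    (u : ℝ → ℝ) (hu : ContDiffOn ℝ 2 u (Icc d 1))
    (hpos : ∀ x ∈ Ioo d 1, 0 < u x)
    (hode : ∀ r ∈ Ioo d 1,
      deriv (deriv u) r + (((n : ℝ) - 1) / r) * deriv u r = u r ^ q)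
    (hb1 : u 1 = 0) (hbd : u d = k) :
    ∀ x ∈ Icc d 1,
      u x ≤ k * (x ^ ((2 : ℝ) - n) - 1) / (d ^ ((2 : ℝ) - n) - 1) := by
  set p : ℝ := 2 - n
  set D : ℝ := d ^ p - 1
  have hD : 0 < D := sub_pos.2 <| Real.one_lt_rpow_of_pos_of_lt_one_of_neg hd0 hd1 <| by
    have : (2 : ℝ) < n := by exact_mod_cast hn
    linarith
  set w : ℝ → ℝ := fun x => u x - k / D * (x ^ p - 1)
  have hweight (r) (hr : r ∈ Ioo d 1) :
      r ^ ((n : ℝ) - 1) * deriv w r = r ^ ((n : ℝ) - 1) * deriv u r - k / D * p :=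
    rpow_mul_deriv_sub_rpow _ _ (by ring) (hd0.trans hr.1)
      ((hu.contDiffAt (Icc_mem_nhds hr.1 hr.2)).differentiableAt two_ne_zero)
  have hmono : StrictMonoOn (fun r => r ^ ((n : ℝ) - 1) * deriv w r) (Ioo d 1) := by
    intro x hx y hy hxy
    have := strictMonoOn_rpow_mul_deriv ((n : ℝ) - 1) hd0 (hu.mono Ioo_subset_Icc_self)
      (fun r hr => (hode r hr).symm ▸ Real.rpow_pos_of_pos (hpos r hr) q) hx hy hxy
    simp only [hweight x hx, hweight y hy]
    linarith
  have hcont : ContinuousOn w (Icc d 1) := hu.continuousOn.sub <| continuousOn_const.mul <|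
    (continuousOn_id.rpow_const fun x hx => Or.inl (hd0.trans_le hx.1).ne').sub continuousOn_const
  intro x hx
  have hmax := le_max_of_strictMonoOn_mul_deriv hcont
    (fun r hr => Real.rpow_pos_of_pos (hd0.trans hr.1) _) hmono x hx
  have hwd : w d = 0 := by simp only [w, hbd]; field_simp; ring
  have hw1 : w 1 = 0 := by simp [w, hb1]
  rw [hwd, hw1, max_self, sub_nonpos] at hmax
  rwa [mul_div_right_comm]

theorem stmt0 (n : ℕ) (hn : 2 < n) (q d k : ℝ) (hq : 1 < q)
    (hd0 : 0 < d) (hd1 : d < 1) (hk : 0 < k)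
    (u : ℝ → ℝ) (hu : ContDiffOn ℝ 2 u (Icc d 1))
    (hpos : ∀ x ∈ Ioo d 1, 0 < u x)
    (hode : ∀ r ∈ Ioo d 1,
      deriv (deriv u) r + (((n : ℝ) - 1) / r) * deriv u r = u r ^ q)
    (hb1 : u 1 = 0) (hbd : u d = k) :
    ∀ x ∈ Icc d 1,
      u x ≤ k * (x ^ ((2 : ℝ) - n) - 1) / (d ^ ((2 : ℝ) - n) - 1) :=
  stmt0_general n hn q d k hd0 hd1 u hu hpos hode hb1 hbd
end

section
/- Let n > 2, q > 1, 0 < d < 1, k > 0, and let u ∈ C²([d,1]) be a solution of u'' + ((n-1)/r)u' = u^q on (d,1) with u(1) = 0, u(d) = k, satisfying 0 ≤ u ≤ k. Then u(x) ≥ C₁ x^(2-n) + C₂ x² + C₃ for all x ∈ [d,1], where C₁ = 2C̃₁ - C̃₂, C₂ = (n-2)C̃₁, C₃ = C̃₂ - nC̃₁, with C̃₁ = k^q/(2n(n-2)), C̃₂ = -(k - D₀)/(d^(2-n) - 1), D₀ = C̃₁(2d^(2-n) + (n-2)d² - n). -/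
/-!
On `[d, 1]` the function `u₂ = C₁ x^(2-n) + C₂ x² + C₃` solves the linear problem
`u₂'' + (n-1)/r u₂' = k^q` with `u₂(d) = k`, `u₂(1) = 0`: it is
`C̃₁ (2 x^(2-n) + (n-2) x² - n) + C̃₂ (1 - x^(2-n))`, a particular solution plus a multiple
of the homogeneous one, both vanishing at `1`, with `C̃₂` fitted to the value at `d`.
Since `u ≤ k`, the difference `w = u - u₂` satisfies
`(r^(n-1) w')' = r^(n-1) (u^q - k^q) ≤ 0`, so `r^(n-1) w'` is antitone. A function vanishing
at both ends whose weighted derivative is antitone cannot dip below zero: a negative value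
would force a negative slope to its left and a positive slope to its right.
-/

open Set

theorem nonneg_of_antitoneOn_mul_deriv {a b : ℝ} {w w' ρ : ℝ → ℝ}
    (hw : ContinuousOn w (Icc a b)) (hw' : ∀ x ∈ Ioo a b, HasDerivAt w (w' x) x)
    (hρ : ∀ x ∈ Ioo a b, 0 < ρ x) (hanti : AntitoneOn (fun x => ρ x * w' x) (Ioo a b))
    (ha : 0 ≤ w a) (hb : 0 ≤ w b) {x : ℝ} (hx : x ∈ Icc a b) : 0 ≤ w x := by
  by_contra! hwx
  have hax : a < x := lt_of_le_of_ne hx.1 (by rintro rfl; linarith)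
  have hxb : x < b := lt_of_le_of_ne hx.2 (by rintro rfl; linarith)
  obtain ⟨ξ₁, hξ₁, hslope₁⟩ := exists_hasDerivAt_eq_slope w w' hax
    (hw.mono (Icc_subset_Icc le_rfl hx.2)) fun y hy => hw' y ⟨hy.1, hy.2.trans hxb⟩
  obtain ⟨ξ₂, hξ₂, hslope₂⟩ := exists_hasDerivAt_eq_slope w w' hxb
    (hw.mono (Icc_subset_Icc hx.1 le_rfl)) fun y hy => hw' y ⟨hax.trans hy.1, hy.2⟩
  have hmem₁ : ξ₁ ∈ Ioo a b := ⟨hξ₁.1, hξ₁.2.trans hxb⟩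
  have hmem₂ : ξ₂ ∈ Ioo a b := ⟨hax.trans hξ₂.1, hξ₂.2⟩
  have hneg : ρ ξ₁ * w' ξ₁ < 0 :=
    mul_neg_of_pos_of_neg (hρ ξ₁ hmem₁)
      (hslope₁ ▸ div_neg_of_neg_of_pos (by linarith) (by linarith))
  have hpos : 0 < ρ ξ₂ * w' ξ₂ :=
    mul_pos (hρ ξ₂ hmem₂) (hslope₂ ▸ div_pos (by linarith) (by linarith))
  linarith [hanti hmem₁ hmem₂ (hξ₁.2.trans hξ₂.1).le]

theorem hasDerivAt_rpow_mul {f' : ℝ → ℝ} {f'' r : ℝ} (m : ℝ) (hr : 0 < r)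
    (hf' : HasDerivAt f' f'' r) :
    HasDerivAt (fun x => x ^ m * f' x) (r ^ m * (f'' + m / r * f' r)) r := by
  refine ((Real.hasDerivAt_rpow_const (Or.inl hr.ne')).mul hf').congr_deriv ?_
  rw [Real.rpow_sub_one hr.ne']
  ring

theorem ContDiffAt.hasDerivAt_deriv {f : ℝ → ℝ} {x : ℝ} (hf : ContDiffAt ℝ 2 f x) :
    HasDerivAt (deriv f) (deriv (deriv f) x) x :=
  ((hf.derivWithin (m := 1) (by norm_num)).differentiableAt one_ne_zero).hasDerivAt

noncomputable section

def radialProfile (n C₁ C₂ C₃ x : ℝ) : ℝ := C₁ * x ^ (2 - n) + C₂ * x ^ 2 + C₃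

def radialProfileDeriv (n C₁ C₂ x : ℝ) : ℝ := C₁ * (2 - n) * x ^ (1 - n) + 2 * C₂ * x

end

section RadialProfile

variable {n C₁ C₂ x : ℝ}

theorem hasDerivAt_radialProfile (C₃ : ℝ) (hx : 0 < x) :
    HasDerivAt (radialProfile n C₁ C₂ C₃) (radialProfileDeriv n C₁ C₂ x) x := by
  have hpow := Real.hasDerivAt_rpow_const (p := 2 - n) (Or.inl hx.ne')
  refine (((hpow.const_mul C₁).add ((hasDerivAt_pow 2 x).const_mul C₂)).add_const C₃).congr_deriv
    ?_
  rw [radialProfileDeriv, show (2 : ℝ) - n - 1 = 1 - n by ring]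
  ring

theorem continuousOn_radialProfile (C₃ : ℝ) {s : Set ℝ} (hs : ∀ x ∈ s, 0 < x) :
    ContinuousOn (radialProfile n C₁ C₂ C₃) s := fun x hx =>
  (hasDerivAt_radialProfile C₃ (hs x hx)).continuousAt.continuousWithinAt

/-- The profile solves the radial equation `φ'' + (n-1)/r φ' = 2 n C₂`. -/
theorem hasDerivAt_rpow_mul_radialProfileDeriv (hx : 0 < x) :
    HasDerivAt (fun y => y ^ (n - 1) * radialProfileDeriv n C₁ C₂ y)
      (x ^ (n - 1) * (2 * n * C₂)) x := by
  have hpow := Real.hasDerivAt_rpow_const (p := 1 - n) (Or.inl hx.ne')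
  have hφ' : HasDerivAt (radialProfileDeriv n C₁ C₂)
      (C₁ * (2 - n) * ((1 - n) * x ^ (1 - n - 1)) + 2 * C₂) x := by
    have := (hpow.const_mul (C₁ * (2 - n))).add ((hasDerivAt_id x).const_mul (2 * C₂))
    rwa [mul_one] at this
  refine (hasDerivAt_rpow_mul (n - 1) hx hφ').congr_deriv ?_
  rw [radialProfileDeriv, Real.rpow_sub_one hx.ne' (1 - n)]
  field_simp
  ring

theorem radialProfile_boundary_values {d k a b D₀ : ℝ} (hd : d ^ (2 - n) - 1 ≠ 0)
    (hD₀ : D₀ = a * (2 * d ^ (2 - n) + (n - 2) * d ^ 2 - n))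
    (hb : b = -(k - D₀) / (d ^ (2 - n) - 1)) :
    radialProfile n (2 * a - b) ((n - 2) * a) (b - n * a) d = k ∧
      radialProfile n (2 * a - b) ((n - 2) * a) (b - n * a) 1 = 0 := by
  refine ⟨?_, by rw [radialProfile, Real.one_rpow]; ring⟩
  rw [radialProfile, hb, hD₀]
  field_simp
  ring

end RadialProfile

theorem antitoneOn_rpow_mul_deriv_sub_radialProfileDeriv {u : ℝ → ℝ} {a b n C₁ C₂ : ℝ}
    (ha : 0 ≤ a) (hu : ∀ r ∈ Ioo a b, HasDerivAt (deriv u) (deriv (deriv u) r) r)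
    (hsuper : ∀ r ∈ Ioo a b, deriv (deriv u) r + (n - 1) / r * deriv u r ≤ 2 * n * C₂) :
    AntitoneOn (fun r => r ^ (n - 1) * (deriv u r - radialProfileDeriv n C₁ C₂ r)) (Ioo a b) := by
  have hderiv : ∀ r ∈ Ioo a b, HasDerivAt
      (fun r => r ^ (n - 1) * (deriv u r - radialProfileDeriv n C₁ C₂ r))
      (r ^ (n - 1) * (deriv (deriv u) r + (n - 1) / r * deriv u r - 2 * n * C₂)) r := by
    intro r hr
    have hr0 : 0 < r := ha.trans_lt hr.1
    have hdiff := (hasDerivAt_rpow_mul (n - 1) hr0 (hu r hr)).sub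
      (hasDerivAt_rpow_mul_radialProfileDeriv (n := n) (C₁ := C₁) (C₂ := C₂) hr0)
    refine (hdiff.congr_deriv (by ring)).congr_of_eventuallyEq ?_
    exact Filter.Eventually.of_forall fun y => by simp only [Pi.sub_apply]; ring
  refine antitoneOn_of_hasDerivWithinAt_nonpos (convex_Ioo a b)
    (fun r hr => (hderiv r hr).continuousAt.continuousWithinAt)
    (fun r hr => (hderiv r (interior_subset hr)).hasDerivWithinAt) fun r hr => ?_
  rw [interior_Ioo] at hr
  exact mul_nonpos_of_nonneg_of_nonpos (Real.rpow_nonneg (ha.trans hr.1.le) _)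
      (by linarith [hsuper r hr])

theorem stmt6_general (n : ℕ) (hn : 2 < n) (q d k : ℝ) (hq : 1 < q)
    (hd0 : 0 < d) (hd1 : d < 1)
    (u : ℝ → ℝ) (hu : ContDiffOn ℝ 2 u (Icc d 1))
    (hode : ∀ r ∈ Ioo d 1,
      deriv (deriv u) r + (((n : ℝ) - 1) / r) * deriv u r = u r ^ q)
    (hb1 : u 1 = 0) (hbd : u d = k)
    (hbounds : ∀ x ∈ Icc d 1, 0 ≤ u x ∧ u x ≤ k)
    (Ct₁ Ct₂ D₀ C₁ C₂ C₃ : ℝ)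
    (hCt₁ : Ct₁ = k ^ q / (2 * n * ((n : ℝ) - 2)))
    (hD₀ : D₀ = Ct₁ * (2 * d ^ ((2 : ℝ) - n) + ((n : ℝ) - 2) * d ^ 2 - n))
    (hCt₂ : Ct₂ = -(k - D₀) / (d ^ ((2 : ℝ) - n) - 1))
    (hC₁ : C₁ = 2 * Ct₁ - Ct₂)
    (hC₂ : C₂ = ((n : ℝ) - 2) * Ct₁)
    (hC₃ : C₃ = Ct₂ - n * Ct₁) :
    ∀ x ∈ Icc d 1, C₁ * x ^ ((2 : ℝ) - n) + C₂ * x ^ 2 + C₃ ≤ u x := by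
  have hn' : (2 : ℝ) < n := by exact_mod_cast hn
  have hdpow : d ^ ((2 : ℝ) - n) - 1 ≠ 0 :=
    (sub_pos.2 (Real.one_lt_rpow_of_pos_of_lt_one_of_neg hd0 hd1 (by linarith))).ne'
  obtain ⟨hφd, hφ1⟩ : radialProfile n C₁ C₂ C₃ d = k ∧ radialProfile n C₁ C₂ C₃ 1 = 0 := by
    subst hC₁ hC₂ hC₃
    exact radialProfile_boundary_values hdpow hD₀ hCt₂
  have hC₂k : 2 * n * C₂ = k ^ q := by
    rw [hC₂, hCt₁]
    field_simp [(by linarith : (n : ℝ) - 2 ≠ 0)]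
  have hu₂ : ∀ r ∈ Ioo d 1, HasDerivAt (deriv u) (deriv (deriv u) r) r := fun r hr =>
    (hu.contDiffAt (Icc_mem_nhds hr.1 hr.2)).hasDerivAt_deriv
  have hanti := antitoneOn_rpow_mul_deriv_sub_radialProfileDeriv (C₁ := C₁) hd0.le hu₂
    fun r hr => by
      rw [hode r hr, hC₂k]
      obtain ⟨hu0, huk⟩ := hbounds r (Ioo_subset_Icc_self hr)
      exact Real.rpow_le_rpow hu0 huk (by linarith)
  have hw : ContinuousOn (fun x => u x - radialProfile n C₁ C₂ C₃ x) (Icc d 1) :=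
    hu.continuousOn.sub (continuousOn_radialProfile C₃ fun y hy => hd0.trans_le hy.1)
  have hw' : ∀ r ∈ Ioo d 1, HasDerivAt (fun x => u x - radialProfile n C₁ C₂ C₃ x)
      (deriv u r - radialProfileDeriv n C₁ C₂ r) r := fun r hr =>
    ((hu.contDiffAt (Icc_mem_nhds hr.1 hr.2)).differentiableAt (by norm_num)).hasDerivAt.sub
      (hasDerivAt_radialProfile C₃ (hd0.trans hr.1))
  intro x hx
  have := nonneg_of_antitoneOn_mul_deriv hw hw'
    (fun r hr => Real.rpow_pos_of_pos (hd0.trans hr.1) _) hanti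
    (by simp [hbd, hφd]) (by simp [hb1, hφ1]) hx
  simp only [radialProfile] at this
  linarith

theorem stmt6 (n : ℕ) (hn : 2 < n) (q d k : ℝ) (hq : 1 < q)
    (hd0 : 0 < d) (hd1 : d < 1) (hk : 0 < k)
    (u : ℝ → ℝ) (hu : ContDiffOn ℝ 2 u (Icc d 1))
    (hode : ∀ r ∈ Ioo d 1,
      deriv (deriv u) r + (((n : ℝ) - 1) / r) * deriv u r = u r ^ q)
    (hb1 : u 1 = 0) (hbd : u d = k)
    (hbounds : ∀ x ∈ Icc d 1, 0 ≤ u x ∧ u x ≤ k)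
    (Ct₁ Ct₂ D₀ C₁ C₂ C₃ : ℝ)
    (hCt₁ : Ct₁ = k ^ q / (2 * n * ((n : ℝ) - 2)))
    (hD₀ : D₀ = Ct₁ * (2 * d ^ ((2 : ℝ) - n) + ((n : ℝ) - 2) * d ^ 2 - n))
    (hCt₂ : Ct₂ = -(k - D₀) / (d ^ ((2 : ℝ) - n) - 1))
    (hC₁ : C₁ = 2 * Ct₁ - Ct₂)
    (hC₂ : C₂ = ((n : ℝ) - 2) * Ct₁)
    (hC₃ : C₃ = Ct₂ - n * Ct₁) :
    ∀ x ∈ Icc d 1, C₁ * x ^ ((2 : ℝ) - n) + C₂ * x ^ 2 + C₃ ≤ u x :=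
  stmt6_general n hn q d k hq hd0 hd1 u hu hode hb1 hbd hbounds Ct₁ Ct₂ D₀ C₁ C₂ C₃ hCt₁ hD₀ hCt₂
    hC₁ hC₂ hC₃
end
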